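/- arXiv:1202.3901 — 4 statements merged into one kernel-verified Lean document; each statement's English description precedes it below -/
import Mathlib

section
/- Let $\varphi_m(x, y) = q^{(m-1)(y-x)} \mathbf{1}_{x \le y}$ for $x, y \in \mathbb{Z}$ and $0 < q < 1$. Then for integers $0 \le n_1 < n_2$, the iterated convolution satisfies $(\varphi_{n_1+1} * \cdots * \varphi_{n_2})(x, y) = \mathbf{1}_{x \le y} \, q^{n_1(y-x)} \frac{(q^{y-x+1}; q)_{n_2 - n_1 - 1}}{(q; q)_{n_2 - n_1 - 1}}$. -/
/-- `φ_m(x,y) = q^{(m-1)(y-x)} 1_{x ≤ y}`. -/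
noncomputable def phi (q : ℝ) (m : ℕ) (x y : ℤ) : ℝ :=
  if x ≤ y then q ^ (((m : ℤ) - 1) * (y - x)) else 0

/-- Convolution `(f * g)(x,y) = ∑_{z ∈ ℤ} f(x,z) g(z,y)`. -/
noncomputable def conv (f g : ℤ → ℤ → ℝ) : ℤ → ℤ → ℝ :=
  fun x y => ∑' z : ℤ, f x z * g z y

/-- `iterConv q n1 k = φ_{n1+1} * φ_{n1+2} * ⋯ * φ_{n1+k+1}`. -/
noncomputable def iterConv (q : ℝ) (n1 : ℕ) : ℕ → ℤ → ℤ → ℝ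
  | 0 => phi q (n1 + 1)
  | k + 1 => conv (iterConv q n1 k) (phi q (n1 + k + 2))

/-!
Each `φ_m` is an upper-triangular Toeplitz kernel `(x, y) ↦ 1_{x ≤ y} F(y - x)` with symbol
`F(d) = q^{(m-1)d}`, and convolving two such kernels multiplies their symbols as power series
(Cauchy product). By induction on the number of factors the claim therefore reduces to the finite
identity `(1 - q^{k+1}) ∑_{e+f=m} q^{ne} (q^{e+1};q)_k q^{(n+k+1)f} = q^{nm} (q^{m+1};q)_{k+1}`,
which follows by induction on `m` from
`(q^{m+2};q)_{k+1} = q^{k+1} (q^{m+1};q)_{k+1} + (1 - q^{k+1}) (q^{m+2};q)_k`.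
-/

open Finset

def qPochhammer {R : Type*} [CommRing R] (a q : R) (n : ℕ) : R :=
  ∏ i ∈ range n, (1 - a * q ^ i)

section qPochhammer

variable {R : Type*} [CommRing R] (q : R)

theorem qPochhammer_zero (a : R) : qPochhammer a q 0 = 1 := prod_range_zero _

theorem qPochhammer_succ (a : R) (n : ℕ) :
    qPochhammer a q (n + 1) = qPochhammer a q n * (1 - a * q ^ n) :=
  prod_range_succ _ n

theorem qPochhammer_succ' (a : R) (n : ℕ) :
    qPochhammer a q (n + 1) = (1 - a) * qPochhammer (a * q) q n := by
  rw [qPochhammer, qPochhammer, prod_range_succ', pow_zero, mul_one, mul_comm]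
  exact congrArg _ (prod_congr rfl fun i _ => by ring)

theorem qPochhammer_pow_succ_succ (k m : ℕ) :
    qPochhammer (q ^ (m + 2)) q (k + 1) =
      q ^ (k + 1) * qPochhammer (q ^ (m + 1)) q (k + 1) +
        (1 - q ^ (k + 1)) * qPochhammer (q ^ (m + 2)) q k := by
  rw [qPochhammer_succ, qPochhammer_succ' _ (q ^ (m + 1)), ← pow_succ]
  ring

theorem one_sub_pow_mul_sum_antidiagonal_qPochhammer (n k m : ℕ) :
    (1 - q ^ (k + 1)) * ∑ p ∈ antidiagonal m,
        q ^ (n * p.1) * qPochhammer (q ^ (p.1 + 1)) q k * q ^ ((n + k + 1) * p.2) =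
      q ^ (n * m) * qPochhammer (q ^ (m + 1)) q (k + 1) := by
  induction m with
  | zero =>
    simp only [Nat.antidiagonal_zero, sum_singleton, qPochhammer_succ]
    ring
  | succ m ih =>
    have hshift : ∑ p ∈ antidiagonal m,
        q ^ (n * p.1) * qPochhammer (q ^ (p.1 + 1)) q k * q ^ ((n + k + 1) * (p.2 + 1)) =
          q ^ (n + k + 1) * ∑ p ∈ antidiagonal m,
            q ^ (n * p.1) * qPochhammer (q ^ (p.1 + 1)) q k * q ^ ((n + k + 1) * p.2) := by
      rw [mul_sum]
      exact sum_congr rfl fun p _ => by ring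
    rw [Nat.sum_antidiagonal_succ', hshift, qPochhammer_pow_succ_succ, mul_add,
      mul_left_comm _ (q ^ (n + k + 1)), ih]
    ring

end qPochhammer

def toeplitzKernel (F : ℕ → ℝ) (x y : ℤ) : ℝ :=
  if x ≤ y then F (y - x).toNat else 0

theorem le_of_toeplitzKernel_ne_zero {F : ℕ → ℝ} {x y : ℤ} (h : toeplitzKernel F x y ≠ 0) :
    x ≤ y := by
  by_contra hxy
  exact h (if_neg hxy)

theorem phi_succ_eq_toeplitzKernel (q : ℝ) (m : ℕ) :
    phi q (m + 1) = toeplitzKernel fun d => q ^ (m * d) := by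
  ext x y
  unfold phi toeplitzKernel
  split_ifs with hxy
  · dsimp only
    rw [← zpow_natCast, Nat.cast_mul, Int.toNat_of_nonneg (sub_nonneg.2 hxy)]
    push_cast
    ring_nf
  · rfl

theorem conv_toeplitzKernel (F G : ℕ → ℝ) :
    conv (toeplitzKernel F) (toeplitzKernel G) =
      toeplitzKernel fun m => ∑ p ∈ antidiagonal m, F p.1 * G p.2 := by
  ext x y
  unfold conv
  by_cases hxy : x ≤ y
  · obtain ⟨m, rfl⟩ : ∃ m : ℕ, y = x + m := ⟨(y - x).toNat, by omega⟩
    have hsupp : (Function.support fun z => toeplitzKernel F x z * toeplitzKernel G z (x + m)) ⊆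
        Set.range fun e : ℕ => x + e := fun z hz =>
      have hxz := le_of_toeplitzKernel_ne_zero (left_ne_zero_of_mul hz)
      ⟨(z - x).toNat, by dsimp only; omega⟩
    have hterm : ∀ e : ℕ, toeplitzKernel F x (x + e) * toeplitzKernel G (x + e) (x + m) =
        if e ∈ range (m + 1) then F e * G (m - e) else 0 := by
      intro e
      simp only [toeplitzKernel, mem_range, Nat.lt_succ_iff, add_le_add_iff_left, Nat.cast_le,
        le_add_iff_nonneg_right, Nat.cast_nonneg, if_true, add_sub_cancel_left, Int.toNat_natCast]
      split_ifs with hem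
      · rw [show x + m - (x + e) = ((m - e : ℕ) : ℤ) by omega, Int.toNat_natCast]
      · rw [mul_zero]
    rw [← (add_right_injective x).comp Nat.cast_injective |>.tsum_eq hsupp]
    simp only [Function.comp_apply, hterm]
    rw [tsum_eq_sum fun e he => if_neg he, sum_congr rfl fun e he => if_pos he, toeplitzKernel,
      if_pos hxy, add_sub_cancel_left, Int.toNat_natCast,
      Nat.sum_antidiagonal_eq_sum_range_succ fun i j => F i * G j]
  · have hzero : ∀ z, toeplitzKernel F x z * toeplitzKernel G z y = 0 := fun z => by
      by_contra hz
      exact hxy ((le_of_toeplitzKernel_ne_zero (left_ne_zero_of_mul hz)).trans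
        (le_of_toeplitzKernel_ne_zero (right_ne_zero_of_mul hz)))
    rw [toeplitzKernel, if_neg hxy]
    simp only [hzero, tsum_zero]

theorem iterConv_eq_toeplitzKernel {q : ℝ} (hq : ∀ k : ℕ, q ^ (k + 1) ≠ 1) (n k : ℕ) :
    iterConv q n k = toeplitzKernel fun m =>
      q ^ (n * m) * (qPochhammer (q ^ (m + 1)) q k / qPochhammer q q k) := by
  induction k with
  | zero =>
    simp only [iterConv, phi_succ_eq_toeplitzKernel, qPochhammer_zero, div_one, mul_one]
  | succ k ih =>
    have hk : 1 - q ^ (k + 1) ≠ 0 := sub_ne_zero.2 (hq k).symm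
    rw [iterConv, ih, phi_succ_eq_toeplitzKernel, conv_toeplitzKernel]
    congr 1
    funext m
    rw [← mul_div_assoc, ← one_sub_pow_mul_sum_antidiagonal_qPochhammer, qPochhammer_succ q q,
      ← pow_succ', mul_comm (qPochhammer q q k), ← div_div, mul_div_cancel_left₀ _ hk, sum_div]
    exact sum_congr rfl fun p _ => by ring

theorem stmt3_general (q : ℝ) (hq0 : 0 < q) (hq1 : q < 1) (n1 n2 : ℕ) (x y : ℤ) :
    iterConv q n1 (n2 - n1 - 1) x y =
      if x ≤ y then
        q ^ ((n1 : ℤ) * (y - x)) *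
          ((∏ i ∈ Finset.range (n2 - n1 - 1), (1 - q ^ (y - x + 1) * q ^ i)) /
            ∏ i ∈ Finset.range (n2 - n1 - 1), (1 - q * q ^ i))
      else 0 := by
  rw [iterConv_eq_toeplitzKernel (fun k => (pow_lt_one₀ hq0.le hq1 k.succ_ne_zero).ne),
    toeplitzKernel]
  split_ifs with hxy
  · obtain ⟨m, rfl⟩ : ∃ m : ℕ, y = x + m := ⟨(y - x).toNat, by omega⟩
    rw [add_sub_cancel_left, Int.toNat_natCast, ← Nat.cast_mul, ← Nat.cast_succ, zpow_natCast,
      zpow_natCast]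
    rfl
  · rfl

/-- For `0 ≤ n1 < n2`, the iterated convolution
`(φ_{n1+1} * ⋯ * φ_{n2})(x,y) = 1_{x ≤ y} q^{n1(y-x)} (q^{y-x+1};q)_{n2-n1-1} / (q;q)_{n2-n1-1}`. -/
theorem stmt3 (q : ℝ) (hq0 : 0 < q) (hq1 : q < 1) (n1 n2 : ℕ) (h : n1 < n2) (x y : ℤ) :
    iterConv q n1 (n2 - n1 - 1) x y =
      if x ≤ y then
        q ^ ((n1 : ℤ) * (y - x)) *
          ((∏ i ∈ Finset.range (n2 - n1 - 1), (1 - q ^ (y - x + 1) * q ^ i)) /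
            ∏ i ∈ Finset.range (n2 - n1 - 1), (1 - q * q ^ i))
      else 0 :=
  stmt3_general q hq0 hq1 n1 n2 x y
end

section
/- Define the $q$-Stirling numbers of the second kind $S(n, m; q)$ by the generating-function expansion $\prod_{r=1}^n \frac{1}{1 - [r]_q z} = \sum_{m \ge 0} S(n, m; q) z^m$ for small $|z|$, where $[r]_q = \frac{1 - q^r}{1 - q}$. Then $S(n, m; q) = (q-1)^{-m} \sum_{p=0}^m (-1)^p \binom{m+n}{p} \frac{[m+n-p]_q!}{[n]_q! \, [m-p]_q!}$, where $[k]_q! = [k]_q [k-1]_q \cdots [1]_q$. -/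
/-!
By its generating function, `S(n, m; q)` is the complete homogeneous symmetric polynomial
`h_m([1]_q, …, [n]_q)`, and such numbers are determined by `h_0 = 1`, `h_m() = 0` for `m > 0`
and `h_{m+1}(c_1, …, c_{n+1}) = c_{n+1} h_m(c_1, …, c_{n+1}) + h_{m+1}(c_1, …, c_n)`: the last
relation writes `h_•(c_1, …, c_{n+1})` as the Cauchy product of `h_•(c_1, …, c_n)` with the
geometric series of `c_{n+1}`. So it suffices to check these relations for the explicit formula.
Up to the factor `(q - 1)^m [n]_q!`, the formula is an alternating sum of binomial coefficients
times the ascending `q`-factorials `[a + 1]_q ⋯ [a + n]_q`; the recurrence follows from Pascal's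
rule and `[a + n + 2]_q = [n + 1]_q + q^(n+1) [a + 1]_q`.
-/

open Finset

theorem sum_antidiagonal_mul_pow_of_recurrence {R : Type*} [CommSemiring R] {c : ℕ → R}
    {a : ℕ → ℕ → R}
    (h_zero : ∀ n, a n 0 = 1)
    (h_succ : ∀ n m, a (n + 1) (m + 1) = c (n + 1) * a (n + 1) m + a n (m + 1)) (n m : ℕ) :
    a (n + 1) m = ∑ x ∈ antidiagonal m, a n x.1 * c (n + 1) ^ x.2 := by
  induction m with
  | zero => simp [h_zero]
  | succ m ih =>
    rw [h_succ, ih, Nat.sum_antidiagonal_succ', mul_sum]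
    simp only [pow_zero, mul_one, pow_succ]
    rw [add_comm]
    congr 1
    exact sum_congr rfl fun x _ => by ring

theorem hasSum_prod_inv_one_sub_mul_of_recurrence {c : ℕ → ℝ} {a : ℕ → ℕ → ℝ}
    (h_zero : ∀ n, a n 0 = 1) (h_zero_succ : ∀ m, a 0 (m + 1) = 0)
    (h_succ : ∀ n m, a (n + 1) (m + 1) = c (n + 1) * a (n + 1) m + a n (m + 1)) (n : ℕ) :
    ∃ ε > 0, ∀ z : ℝ, |z| < ε →
      HasSum (fun m => a n m * z ^ m) (∏ r ∈ Icc 1 n, (1 - c r * z)⁻¹) := by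
  induction n with
  | zero =>
    refine ⟨1, one_pos, fun z _ => ?_⟩
    convert hasSum_single (f := fun m => a 0 m * z ^ m) 0 fun m hm => ?_ using 1
    · simp [h_zero]
    · obtain ⟨m, rfl⟩ := Nat.exists_eq_succ_of_ne_zero hm
      simp [h_zero_succ]
  | succ n ih =>
    obtain ⟨ε, hε, hsum⟩ := ih
    refine ⟨min ε (|c (n + 1)| + 1)⁻¹, lt_min hε (by positivity), fun z hz => ?_⟩
    have hgeom : |c (n + 1) * z| < 1 := by
      have hz' : |z| * (|c (n + 1)| + 1) < 1 := by
        rw [← lt_div_iff₀ (by positivity), one_div]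
        exact hz.trans_le (min_le_right _ _)
      rw [abs_mul]
      nlinarith [abs_nonneg z]
    have hf := hsum z (hz.trans_le (min_le_left _ _))
    have hg := hasSum_geometric_of_abs_lt_one hgeom
    have hprod := hasSum_sum_range_mul_of_summable_norm (R := ℝ)
      (summable_norm_iff.mpr hf.summable) (summable_norm_iff.mpr hg.summable)
    rw [hf.tsum_eq, hg.tsum_eq, ← prod_Icc_succ_top (by omega)] at hprod
    have hconv (m : ℕ) : a (n + 1) m * z ^ m =
        ∑ k ∈ range (m + 1), a n k * z ^ k * (c (n + 1) * z) ^ (m - k) := by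
      rw [sum_antidiagonal_mul_pow_of_recurrence h_zero h_succ,
        Nat.sum_antidiagonal_eq_sum_range_succ fun k l => a n k * c (n + 1) ^ l, sum_mul]
      refine sum_congr rfl fun k hk => ?_
      rw [mul_pow, ← pow_sub_mul_pow z (mem_range_succ_iff.mp hk)]
      ring
    simpa only [hconv] using hprod

section QAnalogues

variable {K : Type*} [Field K] (q : K)

def qNum (r : ℕ) : K := (1 - q ^ r) / (1 - q)

def qFactorial (k : ℕ) : K := ∏ r ∈ Icc 1 k, qNum q r

def qAscFactorial (a n : ℕ) : K := ∏ i ∈ range n, qNum q (a + i + 1)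

def qStirling (n m : ℕ) : K :=
  (q - 1) ^ (-(m : ℤ)) * ∑ p ∈ range (m + 1),
    (-1) ^ p * ((m + n).choose p : K) * qFactorial q (m + n - p) /
      (qFactorial q n * qFactorial q (m - p))

def qStirlingNumerator (n m : ℕ) : K :=
  ∑ x ∈ antidiagonal m, (-1) ^ x.1 * ((m + n).choose x.1 : K) * qAscFactorial q x.2 n

theorem qNum_add (a b : ℕ) : qNum q (a + b) = qNum q b + q ^ b * qNum q a := by
  simp only [qNum, pow_add]
  ring

theorem sub_one_mul_qNum {q : K} (hq : q ≠ 1) (r : ℕ) : (q - 1) * qNum q r = q ^ r - 1 := by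
  rw [qNum, mul_div_assoc', div_eq_iff (sub_ne_zero.mpr hq.symm)]
  ring

theorem qFactorial_add (a n : ℕ) :
    qFactorial q (a + n) = qFactorial q a * qAscFactorial q a n := by
  induction n with
  | zero => simp [qAscFactorial]
  | succ n ih =>
    rw [← add_assoc, qFactorial, prod_Icc_succ_top (by omega), ← qFactorial, ih]
    simp only [qAscFactorial, prod_range_succ, mul_assoc]

theorem qAscFactorial_succ_succ (a n : ℕ) :
    qAscFactorial q (a + 1) (n + 1) =
      qNum q (n + 1) * qAscFactorial q (a + 1) n + q ^ (n + 1) * qAscFactorial q a (n + 1) := by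
  have hnum : qNum q (a + 1 + n + 1) = qNum q (n + 1) + q ^ (n + 1) * qNum q (a + 1) := by
    rw [← qNum_add]; ring_nf
  have htop :
      qAscFactorial q (a + 1) (n + 1) = qAscFactorial q (a + 1) n * qNum q (a + 1 + n + 1) :=
    prod_range_succ _ _
  have hbot : qAscFactorial q a (n + 1) = qAscFactorial q (a + 1) n * qNum q (a + 1) := by
    simp only [qAscFactorial, prod_range_succ']
    ring_nf
  rw [htop, hbot, hnum]
  ring

theorem qStirlingNumerator_succ_succ (n m : ℕ) :
    qStirlingNumerator q (n + 1) (m + 1) =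
      qNum q (n + 1) * qStirlingNumerator q n (m + 1) +
        (q ^ (n + 1) - 1) * qStirlingNumerator q (n + 1) m := by
  set B := ∑ x ∈ antidiagonal (m + 1),
    (-1) ^ x.1 * ((m + n + 1).choose x.1 : K) * qAscFactorial q x.2 (n + 1)
  have pascal : qStirlingNumerator q (n + 1) (m + 1) + qStirlingNumerator q (n + 1) m = B := by
    simp only [B, qStirlingNumerator, Nat.sum_antidiagonal_succ, add_assoc, ← sum_add_distrib]
    refine congrArg _ (sum_congr rfl fun x _ => ?_)
    rw [show m + (1 + (n + 1)) = m + (n + 1) + 1 by ring, Nat.choose_succ_succ']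
    push_cast
    ring
  have shift : B = qNum q (n + 1) * qStirlingNumerator q n (m + 1) +
      q ^ (n + 1) * qStirlingNumerator q (n + 1) m := by
    simp only [B, qStirlingNumerator, Nat.sum_antidiagonal_succ', qAscFactorial_succ_succ,
      show m + 1 + n = m + n + 1 by ring, show m + (n + 1) = m + n + 1 by ring]
    rw [qAscFactorial, prod_range_succ, ← qAscFactorial]
    simp only [mul_add, sum_add_distrib, mul_sum, zero_add, ← add_assoc]
    congr 1
    congr 1
    · ring
    all_goals exact sum_congr rfl fun _ _ => by ring
  linear_combination pascal.trans shift

variable {q}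

theorem qNum_ne_zero (hq : ¬IsOfFinOrder q) {r : ℕ} (hr : r ≠ 0) : qNum q r ≠ 0 := by
  have hpow (k : ℕ) (hk : k ≠ 0) : 1 - q ^ k ≠ 0 := fun h =>
    hq (isOfFinOrder_iff_pow_eq_one.mpr ⟨k, Nat.pos_of_ne_zero hk, (sub_eq_zero.mp h).symm⟩)
  exact div_ne_zero (hpow r hr) (by simpa using hpow 1 one_ne_zero)

theorem qFactorial_ne_zero (hq : ¬IsOfFinOrder q) (k : ℕ) : qFactorial q k ≠ 0 :=
  prod_ne_zero_iff.mpr fun r hr => qNum_ne_zero hq (by simp at hr; omega)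

theorem qStirling_eq (hq : ¬IsOfFinOrder q) (n m : ℕ) :
    qStirling q n m = (q - 1) ^ (-(m : ℤ)) * qStirlingNumerator q n m / qFactorial q n := by
  rw [qStirling, qStirlingNumerator, Nat.sum_antidiagonal_eq_sum_range_succ_mk, mul_div_assoc,
    sum_div]
  refine congrArg _ (sum_congr rfl fun p hp => ?_)
  rw [show m + n - p = m - p + n by have := mem_range_succ_iff.mp hp; omega, qFactorial_add]
  field_simp [qFactorial_ne_zero hq]

theorem qStirling_zero_right (hq : ¬IsOfFinOrder q) (n : ℕ) : qStirling q n 0 = 1 := by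
  have h : qFactorial q n = qAscFactorial q 0 n := by simpa [qFactorial] using qFactorial_add q 0 n
  simp [qStirling_eq hq, qStirlingNumerator, ← h, qFactorial_ne_zero hq n]

theorem qStirling_zero_succ (hq : ¬IsOfFinOrder q) (m : ℕ) : qStirling q 0 (m + 1) = 0 := by
  have halt : ∑ x ∈ antidiagonal (m + 1), (-1) ^ x.1 * ((m + 1).choose x.1 : K) = 0 := by
    simpa [mul_comm] using ((Commute.all (-1 : K) 1).add_pow' (m + 1)).symm
  simp [qStirling_eq hq, qStirlingNumerator, qAscFactorial, halt]

theorem qStirling_succ_succ (hq : ¬IsOfFinOrder q) (n m : ℕ) :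
    qStirling q (n + 1) (m + 1) =
      qNum q (n + 1) * qStirling q (n + 1) m + qStirling q n (m + 1) := by
  have hq1 : q ≠ 1 := fun h => hq (h ▸ IsOfFinOrder.one)
  have hF : qFactorial q (n + 1) = qFactorial q n * qNum q (n + 1) :=
    prod_Icc_succ_top (by omega) _
  simp only [qStirling_eq hq, hF, qStirlingNumerator_succ_succ, ← sub_one_mul_qNum hq1,
    zpow_neg, zpow_natCast]
  field_simp [sub_ne_zero.mpr hq1, qFactorial_ne_zero hq, qNum_ne_zero hq (Nat.succ_ne_zero n)]
  ring

end QAnalogues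

theorem hasSum_qStirling_mul_pow {q : ℝ} (hq : ¬IsOfFinOrder q) (n : ℕ) :
    ∃ ε > 0, ∀ z : ℝ, |z| < ε →
      HasSum (fun m => qStirling q n m * z ^ m) (∏ r ∈ Icc 1 n, (1 - qNum q r * z)⁻¹) :=
  hasSum_prod_inv_one_sub_mul_of_recurrence (qStirling_zero_right hq) (qStirling_zero_succ hq)
    (qStirling_succ_succ hq) n

/-- Explicit formula for the `q`-Stirling numbers of the second kind: the coefficients
in the expansion `∏_{r=1}^n (1 - [r]_q z)⁻¹ = ∑_m S(n,m;q) z^m` (for `|z|` small) are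
given by `S(n,m;q) = (q-1)^{-m} ∑_{p=0}^m (-1)^p C(m+n, p) [m+n-p]_q! / ([n]_q! [m-p]_q!)`,
where `[r]_q = (1-q^r)/(1-q)` and `[k]_q! = [k]_q ⋯ [1]_q`. -/
theorem stmt7 (q : ℝ) (hq0 : 0 < q) (hq1 : q < 1) (n : ℕ) :
    ∃ ε > (0 : ℝ), ∀ z : ℝ, |z| < ε →
      HasSum (fun m : ℕ =>
        ((q - 1) ^ (-(m : ℤ)) *
          ∑ p ∈ Finset.range (m + 1),
            (-1 : ℝ) ^ p * (Nat.choose (m + n) p : ℝ) *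
              (∏ r ∈ Finset.Icc 1 (m + n - p), ((1 - q ^ r) / (1 - q))) /
                ((∏ r ∈ Finset.Icc 1 n, ((1 - q ^ r) / (1 - q))) *
                  ∏ r ∈ Finset.Icc 1 (m - p), ((1 - q ^ r) / (1 - q)))) * z ^ m)
        (∏ r ∈ Finset.Icc 1 n, (1 - ((1 - q ^ r) / (1 - q)) * z)⁻¹) := by
  have hq : ¬IsOfFinOrder q := fun h => by
    obtain ⟨k, hk, hqk⟩ := isOfFinOrder_iff_pow_eq_one.mp h
    exact (pow_lt_one₀ hq0.le hq1 hk.ne').ne hqk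
  simpa only [qStirling, qFactorial, qNum] using hasSum_qStirling_mul_pow hq n
end

section
/- For integers $N \geq 1$, $1 \le n_1 \le N$, $0 \le l \le N-1$, and $0 < q < 1$: $\sum_{i=0}^{n_1-1} \Big(\prod_{r=n_1+1}^{N}(1 - q^{r-i-1})\Big)(-1)^{N-i-1}\binom{N-1-l}{N-1-i} = (-1)^{N+n_1}(1-q)^{N-l-1}[N-n_1]_q! \cdot S(N-n_1, n_1-l-1; q)$, where $S(\cdot, \cdot; q)$ are the $q$-Stirling numbers of the second kind. -/
/-!
Comparing coefficients in
`(1 - [n+1]_q z) · ∏_{r ≤ n+1} (1 - [r]_q z)⁻¹ = ∏_{r ≤ n} (1 - [r]_q z)⁻¹` gives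
`S(n+1,m) = S(n,m) + [n+1]_q S(n+1,m-1)` and `S(0,m) = δ_{m,0}`. Substituting
`i = n1 - 1 - j`, the left-hand side becomes `(-1)^n ∑_j (-1)^j C(n+m, n+j) (q^{j+1};q)_n` with
`n = N - n1` and `m = n1 - l - 1`. This alternating sum satisfies the same Pascal-type recurrence
as `(1-q)^m (q;q)_n S(n,m;q)`, so the two agree by induction on `n` and `m`.
-/

open Finset Filter Topology

section PowerSeries

variable {𝕜 : Type*} [NontriviallyNormedField 𝕜]

theorem hasFPowerSeriesAt_ofScalars_of_eventually_hasSum {c : ℕ → 𝕜} {f : 𝕜 → 𝕜}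
    (h : ∀ᶠ z in 𝓝 0, HasSum (fun m => c m * z ^ m) (f z)) :
    HasFPowerSeriesAt f (FormalMultilinearSeries.ofScalars 𝕜 c) 0 := by
  obtain ⟨ε, hε, hball⟩ := Metric.eventually_nhds_iff.1 h
  obtain ⟨w, hw0, hwε⟩ := NormedField.exists_norm_lt 𝕜 hε
  refine ⟨‖w‖₊, ?_, by simpa using hw0, fun {y} hy => ?_⟩
  · refine FormalMultilinearSeries.le_radius_of_tendsto _ (l := 0) ?_
    have := (hball (by simpa using hwε)).summable.tendsto_atTop_zero.norm
    simpa [FormalMultilinearSeries.ofScalars_norm, norm_mul, norm_pow] using this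
  · have hy : ‖y‖ < ε := by
      simp only [Metric.mem_eball, edist_zero_right, enorm_eq_nnnorm, ENNReal.coe_lt_coe] at hy
      exact (show ‖y‖ < ‖w‖ from hy).trans hwε
    simp only [FormalMultilinearSeries.ofScalars_apply_eq, smul_eq_mul, zero_add]
    exact hball (by simpa using hy)

theorem coeff_eq_of_eventually_hasSum {a b : ℕ → 𝕜} {f : 𝕜 → 𝕜}
    (ha : ∀ᶠ z in 𝓝 0, HasSum (fun m => a m * z ^ m) (f z))
    (hb : ∀ᶠ z in 𝓝 0, HasSum (fun m => b m * z ^ m) (f z)) : a = b :=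
  FormalMultilinearSeries.ofScalars_series_injective 𝕜 𝕜
    ((hasFPowerSeriesAt_ofScalars_of_eventually_hasSum ha).eq_formalMultilinearSeries
      (hasFPowerSeriesAt_ofScalars_of_eventually_hasSum hb))

theorem HasSum.sub_mul_coeff_pred {b : ℤ → 𝕜} (hb : ∀ m < 0, b m = 0) {c z B : 𝕜}
    (h : HasSum (fun m : ℕ => b m * z ^ m) B) :
    HasSum (fun m : ℕ => (b m - c * b (m - 1)) * z ^ m) ((1 - c * z) * B) := by
  have hshift : HasSum (fun m : ℕ => c * b (m - 1) * z ^ m) (c * z * B) := by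
    refine (hasSum_nat_add_iff' 1).mp ?_
    simp only [sum_range_one, Nat.cast_zero, zero_sub, hb (-1) (by norm_num), mul_zero, zero_mul,
      sub_zero, Nat.cast_add, Nat.cast_one, add_sub_cancel_right]
    exact (h.mul_left (c * z)).congr_fun fun m => by ring
  simpa [sub_mul] using h.sub hshift

end PowerSeries

section QPochhammer

variable {R : Type*} [CommRing R]

/-- The `q`-Pochhammer symbol `(q^(j+1); q)_n`. -/
def qPoch (q : R) (j n : ℕ) : R := ∏ k ∈ range n, (1 - q ^ (j + k + 1))

def qAltSum (q : R) (n m : ℕ) : R :=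
  ∑ j ∈ range (m + 1), (-1) ^ j * ((n + m).choose (n + j) : R) * qPoch q j n

theorem qPoch_zero_right (q : R) (j : ℕ) : qPoch q j 0 = 1 := prod_range_zero _

theorem qPoch_succ (q : R) (j n : ℕ) : qPoch q j (n + 1) = qPoch q j n * (1 - q ^ (j + n + 1)) :=
  prod_range_succ _ _

theorem one_sub_pow_mul_qPoch_succ_left (q : R) (j n : ℕ) :
    (1 - q ^ (j + 1)) * qPoch q (j + 1) n = qPoch q j (n + 1) := by
  rw [qPoch, qPoch, prod_range_succ', mul_comm, add_zero]
  congr 1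
  exact prod_congr rfl fun k _ => by ring_nf

theorem qAltSum_eq_sum_range (q : R) (n m : ℕ) {K : ℕ} (hK : m + 1 ≤ K) :
    qAltSum q n m = ∑ j ∈ range K, (-1) ^ j * ((n + m).choose (n + j) : R) * qPoch q j n := by
  refine sum_subset (range_subset_range.2 hK) fun j _ hj => ?_
  rw [mem_range, not_lt] at hj
  rw [Nat.choose_eq_zero_of_lt (by omega), Nat.cast_zero, mul_zero, zero_mul]

theorem sum_range_neg_one_pow_mul_qPoch (q : R) (n m : ℕ) {K : ℕ} (hK : m + 1 ≤ K) :
    ∑ j ∈ range K, (-1) ^ (n + j) * ((n + m).choose (n + j) : R) * qPoch q j n =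
      (-1) ^ n * qAltSum q n m := by
  rw [qAltSum_eq_sum_range q n m hK, mul_sum]
  exact sum_congr rfl fun j _ => by ring

theorem qAltSum_zero_left (q : R) (m : ℕ) : qAltSum q 0 m = if m = 0 then 1 else 0 := by
  simp only [qAltSum, qPoch_zero_right, zero_add, mul_one]
  have h := congrArg (Int.cast : ℤ → R) (Int.alternating_sum_range_choose (n := m))
  push_cast at h
  exact h

theorem qAltSum_zero_right (q : R) (n : ℕ) : qAltSum q n 0 = qPoch q 0 n := by
  simp [qAltSum]

theorem one_sub_pow_mul_qAltSum_succ_right (q : R) (n m : ℕ) :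
    (1 - q ^ (n + 1)) * qAltSum q n (m + 1) =
      ∑ j ∈ range (m + 1 + 1), (-1) ^ j * ((n + m + 1).choose (n + j) : R) * qPoch q j (n + 1) +
        q ^ (n + 1) * qAltSum q (n + 1) m := by
  have hshift : qAltSum q (n + 1) m = - ∑ j ∈ range (m + 1 + 1),
      (-1) ^ j * ((n + m + 1).choose (n + j) : R) * ((1 - q ^ j) * qPoch q j n) := by
    rw [sum_range_succ', pow_zero q, sub_self, zero_mul, mul_zero, add_zero, ← sum_neg_distrib,
      qAltSum]
    refine sum_congr rfl fun j _ => ?_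
    rw [one_sub_pow_mul_qPoch_succ_left, show n + 1 + m = n + m + 1 by ring,
      show n + 1 + j = n + (j + 1) by ring]
    ring
  rw [hshift, qAltSum, show n + (m + 1) = n + m + 1 by ring, mul_sum, mul_neg, mul_sum,
    ← sub_eq_add_neg, ← sum_sub_distrib]
  refine sum_congr rfl fun j _ => ?_
  rw [qPoch_succ]
  ring

theorem qAltSum_succ_succ (q : R) (n m : ℕ) :
    qAltSum q (n + 1) (m + 1) =
      (1 - q ^ (n + 1)) * (qAltSum q (n + 1) m + qAltSum q n (m + 1)) := by
  have hpascal : qAltSum q (n + 1) (m + 1) =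
      ∑ j ∈ range (m + 1 + 1), (-1) ^ j * ((n + m + 1).choose (n + j) : R) * qPoch q j (n + 1) +
        qAltSum q (n + 1) m := by
    rw [qAltSum_eq_sum_range q (n + 1) m (Nat.le_succ _), qAltSum, ← sum_add_distrib]
    refine sum_congr rfl fun j _ => ?_
    rw [show n + 1 + (m + 1) = n + m + 1 + 1 by ring, show n + 1 + j = n + j + 1 by ring,
      Nat.choose_succ_succ, show n + 1 + m = n + m + 1 by ring]
    push_cast
    ring
  rw [hpascal, mul_add, one_sub_pow_mul_qAltSum_succ_right]
  ring

end QPochhammer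

section QStirling

variable {𝕜 : Type*} [NontriviallyNormedField 𝕜] {q : 𝕜} {S : ℕ → ℤ → 𝕜}

theorem qStirling_zero_left
    (hS : ∀ᶠ z in 𝓝 0, HasSum (fun m : ℕ => S 0 m * z ^ m)
      (∏ r ∈ Icc 1 0, (1 - ((1 - q ^ r) / (1 - q)) * z)⁻¹)) (m : ℕ) :
    S 0 m = if m = 0 then 1 else 0 := by
  refine congrFun (coeff_eq_of_eventually_hasSum (b := fun m => if m = 0 then 1 else 0) hS
    (Eventually.of_forall fun z => ?_)) m
  rw [Icc_eq_empty_of_lt zero_lt_one, prod_empty]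
  exact (hasSum_ite_eq 0 (1 : 𝕜)).congr_fun fun m => by split_ifs <;> simp [*]

theorem qStirling_succ {n : ℕ} (hSneg : ∀ m < 0, S (n + 1) m = 0)
    (hS : ∀ᶠ z in 𝓝 0, HasSum (fun m : ℕ => S n m * z ^ m)
      (∏ r ∈ Icc 1 n, (1 - ((1 - q ^ r) / (1 - q)) * z)⁻¹))
    (hS' : ∀ᶠ z in 𝓝 0, HasSum (fun m : ℕ => S (n + 1) m * z ^ m)
      (∏ r ∈ Icc 1 (n + 1), (1 - ((1 - q ^ r) / (1 - q)) * z)⁻¹)) (m : ℕ) :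
    S (n + 1) m = S n m + (1 - q ^ (n + 1)) / (1 - q) * S (n + 1) (m - 1) := by
  set c := (1 - q ^ (n + 1)) / (1 - q)
  have hne : ∀ᶠ z in 𝓝 (0 : 𝕜), 1 - c * z ≠ 0 :=
    (continuous_const.sub (continuous_const.mul continuous_id)).continuousAt.eventually_ne
      (by simp)
  have key := coeff_eq_of_eventually_hasSum
    (a := fun m : ℕ => S (n + 1) m - c * S (n + 1) (m - 1)) ?_ hS
  · rw [← congrFun key m]
    ring
  filter_upwards [hS', hne] with z hz hz'
  convert hz.sub_mul_coeff_pred hSneg using 1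
  rw [prod_Icc_succ_top (by omega), mul_left_comm, mul_inv_cancel₀ hz', mul_one]

theorem qStirling_zero_right_s8 (hSneg : ∀ n, ∀ m < 0, S n m = 0)
    (hS : ∀ n, ∀ᶠ z in 𝓝 0, HasSum (fun m : ℕ => S n m * z ^ m)
      (∏ r ∈ Icc 1 n, (1 - ((1 - q ^ r) / (1 - q)) * z)⁻¹)) (n : ℕ) : S n 0 = 1 := by
  induction n with
  | zero => simpa using qStirling_zero_left (hS 0) 0
  | succ n ih =>
    simpa [hSneg (n + 1) (-1) (by norm_num), ih] using
      qStirling_succ (hSneg (n + 1)) (hS n) (hS (n + 1)) 0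

-- Also true at `q = 1`, where both sides vanish.
theorem one_sub_mul_qNum (q : 𝕜) (r : ℕ) : (1 - q) * ((1 - q ^ r) / (1 - q)) = 1 - q ^ r :=
  mul_div_cancel_of_imp' fun h => by rw [← sub_eq_zero.1 h, one_pow, sub_self]

theorem one_sub_pow_mul_prod_qNum (q : 𝕜) (n : ℕ) :
    (1 - q) ^ n * ∏ r ∈ Icc 1 n, (1 - q ^ r) / (1 - q) = qPoch q 0 n := by
  induction n with
  | zero => simp [qPoch_zero_right]
  | succ n ih =>
    rw [prod_Icc_succ_top (by omega), qPoch_succ, ← ih, zero_add]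
    linear_combination (1 - q) ^ n * (∏ r ∈ Icc 1 n, (1 - q ^ r) / (1 - q)) *
      one_sub_mul_qNum q (n + 1)

theorem one_sub_pow_mul_qPoch_mul_qStirling (hSneg : ∀ n, ∀ m < 0, S n m = 0)
    (hS : ∀ n, ∀ᶠ z in 𝓝 0, HasSum (fun m : ℕ => S n m * z ^ m)
      (∏ r ∈ Icc 1 n, (1 - ((1 - q ^ r) / (1 - q)) * z)⁻¹)) (n m : ℕ) :
    (1 - q) ^ m * qPoch q 0 n * S n m = qAltSum q n m := by
  induction n generalizing m with
  | zero =>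
    rw [qStirling_zero_left (hS 0), qPoch_zero_right, qAltSum_zero_left]
    split_ifs with h <;> simp [h]
  | succ n ih =>
    induction m with
    | zero =>
      simp [qStirling_zero_right_s8 hSneg hS, qAltSum_zero_right]
    | succ m ihm =>
      have hrec := qStirling_succ (hSneg (n + 1)) (hS n) (hS (n + 1)) (m + 1)
      push_cast at hrec
      rw [add_sub_cancel_right] at hrec
      rw [qAltSum_succ_succ, ← ihm, ← ih, Nat.cast_succ, hrec, qPoch_succ]
      linear_combination ((1 - q) ^ m * qPoch q 0 n * (1 - q ^ (0 + n + 1)) * S (n + 1) m) *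
        one_sub_mul_qNum q (n + 1)

end QStirling

theorem sum_prod_one_sub_zpow_eq_sum_qPoch {K : Type*} [Field K] (q : K) (n n1 a : ℕ) :
    ∑ i ∈ range n1, (∏ r ∈ Icc (n1 + 1) (n + n1), (1 - q ^ ((r : ℤ) - (i : ℤ) - 1))) *
        (-1 : K) ^ (n + n1 - i - 1) * (a.choose (n + n1 - 1 - i) : K) =
      ∑ j ∈ range n1, (-1) ^ (n + j) * (a.choose (n + j) : K) * qPoch q j n := by
  conv_rhs => rw [← sum_range_reflect]
  refine sum_congr rfl fun i hi => ?_
  rw [mem_range] at hi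
  have hprod : ∏ r ∈ Icc (n1 + 1) (n + n1), (1 - q ^ ((r : ℤ) - (i : ℤ) - 1)) =
      qPoch q (n1 - 1 - i) n := by
    rw [← Ico_add_one_right_eq_Icc, prod_Ico_eq_prod_range,
      show n + n1 + 1 - (n1 + 1) = n by omega]
    refine prod_congr rfl fun k _ => ?_
    rw [show ((n1 + 1 + k : ℕ) : ℤ) - i - 1 = ((n1 - 1 - i + k + 1 : ℕ) : ℤ) by omega,
      zpow_natCast]
  rw [hprod, show n + n1 - i - 1 = n + (n1 - 1 - i) by omega,
    show n + n1 - 1 - i = n + (n1 - 1 - i) by omega]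
  ring

theorem stmt8_general (q : ℝ)
    (S : ℕ → ℤ → ℝ)
    (hSneg : ∀ n : ℕ, ∀ m : ℤ, m < 0 → S n m = 0)
    (hSgen : ∀ n : ℕ, ∃ ε > (0 : ℝ), ∀ z : ℝ, |z| < ε →
      HasSum (fun m : ℕ => S n (m : ℤ) * z ^ m)
        (∏ r ∈ Finset.Icc 1 n, (1 - ((1 - q ^ r) / (1 - q)) * z)⁻¹))
    (N n1 l : ℕ) (hn1N : n1 ≤ N) (hl : l ≤ N - 1) :
    ∑ i ∈ Finset.range n1,
        (∏ r ∈ Finset.Icc (n1 + 1) N, (1 - q ^ ((r : ℤ) - (i : ℤ) - 1))) *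
          (-1 : ℝ) ^ (N - i - 1) * (Nat.choose (N - 1 - l) (N - 1 - i) : ℝ) =
      (-1 : ℝ) ^ (N + n1) * (1 - q) ^ (N - l - 1) *
        (∏ r ∈ Finset.Icc 1 (N - n1), ((1 - q ^ r) / (1 - q))) *
        S (N - n1) ((n1 : ℤ) - (l : ℤ) - 1) := by
  have hS : ∀ n, ∀ᶠ z in 𝓝 (0 : ℝ), HasSum (fun m : ℕ => S n m * z ^ m)
      (∏ r ∈ Icc 1 n, (1 - ((1 - q ^ r) / (1 - q)) * z)⁻¹) := fun n => by
    obtain ⟨ε, hε, h⟩ := hSgen n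
    exact Metric.eventually_nhds_iff.2 ⟨ε, hε, fun z hz => h z (by simpa using hz)⟩
  obtain ⟨n, rfl⟩ : ∃ n, N = n + n1 := ⟨N - n1, by omega⟩
  rw [sum_prod_one_sub_zpow_eq_sum_qPoch, Nat.add_sub_cancel]
  rcases lt_or_ge l n1 with hln1 | hn1l
  · obtain ⟨m, rfl⟩ : ∃ m, n1 = l + m + 1 := ⟨n1 - l - 1, by omega⟩
    rw [show n + (l + m + 1) - 1 - l = n + m by omega,
      sum_range_neg_one_pow_mul_qPoch q n m (by omega),
      ← one_sub_pow_mul_qPoch_mul_qStirling hSneg hS, ← one_sub_pow_mul_prod_qNum,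
      show n + (l + m + 1) - l - 1 = n + m by omega,
      show ((l + m + 1 : ℕ) : ℤ) - l - 1 = m by push_cast; ring,
      show n + (l + m + 1) + (l + m + 1) = n + 2 * (l + m + 1) by ring, pow_add, pow_mul,
      neg_one_sq, one_pow]
    ring
  · rw [sum_eq_zero fun j hj => ?_, hSneg n _ (by omega), mul_zero]
    rw [mem_range] at hj
    rw [Nat.choose_eq_zero_of_lt (by omega), Nat.cast_zero, mul_zero, zero_mul]

/-- The key summation identity relating the Eynard-Mehta sum to `q`-Stirling numbers:
for any family `S : ℕ → ℤ → ℝ` of `q`-Stirling numbers of the second kind (defined by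
the generating-function expansion `∏_{r=1}^n (1-[r]_q z)⁻¹ = ∑_m S(n,m;q) z^m`, with
`S(n,m;q) = 0` for `m < 0`), and for `1 ≤ n1 ≤ N`, `0 ≤ l ≤ N-1`, `0 < q < 1`:
`∑_{i=0}^{n1-1} (∏_{r=n1+1}^N (1-q^{r-i-1})) (-1)^{N-i-1} C(N-1-l, N-1-i)
   = (-1)^{N+n1} (1-q)^{N-l-1} [N-n1]_q! · S(N-n1, n1-l-1; q)`. -/
theorem stmt8 (q : ℝ) (hq0 : 0 < q) (hq1 : q < 1)
    (S : ℕ → ℤ → ℝ)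
    (hSneg : ∀ n : ℕ, ∀ m : ℤ, m < 0 → S n m = 0)
    (hSgen : ∀ n : ℕ, ∃ ε > (0 : ℝ), ∀ z : ℝ, |z| < ε →
      HasSum (fun m : ℕ => S n (m : ℤ) * z ^ m)
        (∏ r ∈ Finset.Icc 1 n, (1 - ((1 - q ^ r) / (1 - q)) * z)⁻¹))
    (N n1 l : ℕ) (hN : 1 ≤ N) (hn1 : 1 ≤ n1) (hn1N : n1 ≤ N) (hl : l ≤ N - 1) :
    ∑ i ∈ Finset.range n1,
        (∏ r ∈ Finset.Icc (n1 + 1) N, (1 - q ^ ((r : ℤ) - (i : ℤ) - 1))) *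
          (-1 : ℝ) ^ (N - i - 1) * (Nat.choose (N - 1 - l) (N - 1 - i) : ℝ) =
      (-1 : ℝ) ^ (N + n1) * (1 - q) ^ (N - l - 1) *
        (∏ r ∈ Finset.Icc 1 (N - n1), ((1 - q ^ r) / (1 - q))) *
        S (N - n1) ((n1 : ℤ) - (l : ℤ) - 1) :=
  stmt8_general q S hSneg hSgen N n1 l hn1N hl
end

section
/- Let $\chi(w)$ and $\eta(w)$ be the frozen boundary parametrization $\chi(w) = w + \frac{\Pi(w)-1}{\Sigma(w)}$, $\eta(w) = \frac{\Pi(w)(\Sigma(w)-\Pi(w)+2)-1}{\Pi(w)\Sigma(w)}$, where $\Pi(w) = \prod_{i=1}^k \frac{w-b_i}{w-a_i}$ and $\Sigma(w) = \sum_{i=1}^k (\frac{1}{w-b_i} - \frac{1}{w-a_i})$ with $a_1 < b_1 < \cdots < a_k < b_k$. Then wherever everything is defined and $\dot\eta(w) \neq 0$, the tangent slope satisfies $\frac{\dot\chi(w)}{\dot\eta(w)} = \frac{\Pi(w)}{1 - \Pi(w)} = \frac{w - \chi(w)}{1 - \eta(w)}$. -/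
/-!
The logarithmic derivative of `Π` is `Σ`, i.e. `Π' = Π Σ`. Differentiating the parametrization
with this rule gives `χ' = 1 + Π + (1 - Π) Σ' / Σ²` and `η' = (1 - Π) / Π · χ'`, which is the first
slope. For the second, `w - χ = (1 - Π) / Σ` and `1 - η = (1 - Π)² / (Π Σ)`.
-/

open Finset

variable {𝕜 : Type*} [NontriviallyNormedField 𝕜]

def boundaryChi (P S : 𝕜 → 𝕜) (x : 𝕜) : 𝕜 := x + (P x - 1) / S x

def boundaryEta (P S : 𝕜 → 𝕜) (x : 𝕜) : 𝕜 := (P x * (S x - P x + 2) - 1) / (P x * S x)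

theorem hasDerivAt_sub_div_sub {a b w : 𝕜} (ha : w ≠ a) (hb : w ≠ b) :
    HasDerivAt (fun x => (x - b) / (x - a))
      ((w - b) / (w - a) * (1 / (w - b) - 1 / (w - a))) w := by
  have ha' := sub_ne_zero.2 ha
  have hb' := sub_ne_zero.2 hb
  refine (((hasDerivAt_id' w).sub_const b).fun_div
    ((hasDerivAt_id' w).sub_const a) ha').congr_deriv ?_
  field_simp

theorem hasDerivAt_prod_sub_div_sub {ι : Type*} (s : Finset ι) {a b : ι → 𝕜} {w : 𝕜}
    (ha : ∀ i ∈ s, w ≠ a i) (hb : ∀ i ∈ s, w ≠ b i) :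
    HasDerivAt (fun x => ∏ i ∈ s, (x - b i) / (x - a i))
      ((∏ i ∈ s, (w - b i) / (w - a i)) * ∑ i ∈ s, (1 / (w - b i) - 1 / (w - a i))) w := by
  classical
  refine (HasDerivAt.fun_finsetProd fun i hi =>
    hasDerivAt_sub_div_sub (ha i hi) (hb i hi)).congr_deriv ?_
  rw [mul_sum]
  refine sum_congr rfl fun i hi => ?_
  rw [smul_eq_mul, ← mul_assoc, prod_erase_mul _ _ hi]

theorem hasDerivAt_boundaryChi {P S : 𝕜 → 𝕜} {S' w : 𝕜} (hP : HasDerivAt P (P w * S w) w)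
    (hS : HasDerivAt S S' w) (hS0 : S w ≠ 0) :
    HasDerivAt (boundaryChi P S) (1 + P w + (1 - P w) * S' / S w ^ 2) w := by
  refine ((hasDerivAt_id' w).fun_add ((hP.sub_const 1).fun_div hS hS0)).congr_deriv ?_
  field_simp
  ring

theorem hasDerivAt_boundaryEta {P S : 𝕜 → 𝕜} {S' w : 𝕜} (hP : HasDerivAt P (P w * S w) w)
    (hS : HasDerivAt S S' w) (hS0 : S w ≠ 0) (hP0 : P w ≠ 0) :
    HasDerivAt (boundaryEta P S) ((1 - P w) / P w * (1 + P w + (1 - P w) * S' / S w ^ 2)) w := by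
  refine (((hP.fun_mul ((hS.fun_sub hP).add_const 2)).sub_const 1).fun_div (hP.fun_mul hS)
    (mul_ne_zero hP0 hS0)).congr_deriv ?_
  field_simp
  ring

theorem one_sub_boundaryEta {P S : 𝕜 → 𝕜} {x : 𝕜} (hS0 : S x ≠ 0) (hP0 : P x ≠ 0) :
    1 - boundaryEta P S x = (1 - P x) ^ 2 / (P x * S x) := by
  rw [boundaryEta]
  field_simp
  ring

theorem sub_boundaryChi_div_one_sub_boundaryEta {P S : 𝕜 → 𝕜} {x : 𝕜} (hS0 : S x ≠ 0)
    (hP0 : P x ≠ 0) (hP1 : P x ≠ 1) :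
    (x - boundaryChi P S x) / (1 - boundaryEta P S x) = P x / (1 - P x) := by
  have h1P : 1 - P x ≠ 0 := sub_ne_zero.2 hP1.symm
  rw [one_sub_boundaryEta hS0 hP0, boundaryChi]
  field_simp
  ring

theorem stmt16_general (k : ℕ) (a b : Fin k → ℝ)
    (Pi Sig chi eta : ℝ → ℝ)
    (hPi : ∀ x, Pi x = ∏ i, (x - b i) / (x - a i))
    (hSig : ∀ x, Sig x = ∑ i, (1 / (x - b i) - 1 / (x - a i)))
    (hchi : ∀ x, chi x = x + (Pi x - 1) / Sig x)
    (heta : ∀ x, eta x = (Pi x * (Sig x - Pi x + 2) - 1) / (Pi x * Sig x))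
    (w : ℝ) (hwa : ∀ i, w ≠ a i) (hwb : ∀ i, w ≠ b i)
    (hS0 : Sig w ≠ 0) (hP0 : Pi w ≠ 0) (hP1 : Pi w ≠ 1)
    (hder : deriv eta w ≠ 0) :
    deriv chi w / deriv eta w = Pi w / (1 - Pi w) ∧
      deriv chi w / deriv eta w = (w - chi w) / (1 - eta w) := by
  obtain rfl : chi = boundaryChi Pi Sig := funext hchi
  obtain rfl : eta = boundaryEta Pi Sig := funext heta
  have hPi' : HasDerivAt Pi (Pi w * Sig w) w := by
    rw [funext hPi, hSig]
    exact hasDerivAt_prod_sub_div_sub _ (fun i _ => hwa i) (fun i _ => hwb i)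
  have hSig' : DifferentiableAt ℝ Sig w := by
    rw [funext hSig]
    fun_prop (disch := simp [sub_ne_zero, hwa, hwb])
  rw [(hasDerivAt_boundaryEta hPi' hSig'.hasDerivAt hS0 hP0).deriv] at hder ⊢
  rw [(hasDerivAt_boundaryChi hPi' hSig'.hasDerivAt hS0).deriv,
    sub_boundaryChi_div_one_sub_boundaryEta hS0 hP0 hP1, and_self]
  generalize 1 + Pi w + (1 - Pi w) * deriv Sig w / Sig w ^ 2 = c at hder ⊢
  rw [mul_comm, ← div_div, div_self (right_ne_zero_of_mul hder), one_div_div]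

/-- Tangent slope of the frozen boundary parametrization
`χ(w) = w + (Π(w)-1)/Σ(w)`, `η(w) = (Π(w)(Σ(w)-Π(w)+2)-1)/(Π(w)Σ(w))`:
wherever everything is defined and `η̇(w) ≠ 0`,
`χ̇(w)/η̇(w) = Π(w)/(1-Π(w)) = (w - χ(w))/(1 - η(w))`. -/
theorem stmt16 (k : ℕ) (a b : Fin k → ℝ)
    (hab : ∀ i, a i < b i) (hba : ∀ i j : Fin k, i < j → b i < a j)
    (Pi Sig chi eta : ℝ → ℝ)
    (hPi : ∀ x, Pi x = ∏ i, (x - b i) / (x - a i))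
    (hSig : ∀ x, Sig x = ∑ i, (1 / (x - b i) - 1 / (x - a i)))
    (hchi : ∀ x, chi x = x + (Pi x - 1) / Sig x)
    (heta : ∀ x, eta x = (Pi x * (Sig x - Pi x + 2) - 1) / (Pi x * Sig x))
    (w : ℝ) (hwa : ∀ i, w ≠ a i) (hwb : ∀ i, w ≠ b i)
    (hS0 : Sig w ≠ 0) (hP0 : Pi w ≠ 0) (hP1 : Pi w ≠ 1) (heta1 : eta w ≠ 1)
    (hder : deriv eta w ≠ 0) :
    deriv chi w / deriv eta w = Pi w / (1 - Pi w) ∧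
      deriv chi w / deriv eta w = (w - chi w) / (1 - eta w) :=
  stmt16_general k a b Pi Sig chi eta hPi hSig hchi heta w hwa hwb hS0 hP0 hP1 hder
end
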